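/- arXiv:2210.16664 — 3 statements merged into one kernel-verified Lean document; each statement's English description precedes it below -/
import Mathlib

section
/- Let ‖·‖ be a norm on ℝⁿ with conjugate norm ‖·‖_*, let V ⊆ ℝⁿ be a nonempty open convex set, α ≥ 0, and let f : V → ℝ be a continuously differentiable convex function. Then the following are equivalent: (1) ⟨h, ∇f(x+h) − ∇f(x)⟩ ≤ α‖h‖² for all x, x+h ∈ V; (2) ‖∇f(x+h) − ∇f(x)‖_* ≤ α‖h‖ for all x, x+h ∈ V; (3) f(x+h) ≤ f(x) + ⟨h, ∇f(x)⟩ + (α/2)‖h‖² for all x, x+h ∈ V. -/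
open scoped RealInnerProductSpace
open Real Matrix

/-- `N` is a norm on the real vector space `E`. -/
def IsNorm {E : Type*} [AddCommGroup E] [Module ℝ E] (N : E → ℝ) : Prop :=
  (∀ x, 0 ≤ N x) ∧ (∀ x, N x = 0 ↔ x = 0) ∧
    (∀ (c : ℝ) (x), N (c • x) = |c| * N x) ∧ ∀ x y, N (x + y) ≤ N x + N y

/-- The conjugate (dual) norm of `N`: `‖y‖_* = sup {⟨y,x⟩ : N x ≤ 1}`. -/
noncomputable def dualNorm {E : Type*} [NormedAddCommGroup E] [InnerProductSpace ℝ E]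
    (N : E → ℝ) (y : E) : ℝ :=
  sSup {r | ∃ x, N x ≤ 1 ∧ r = ⟪y, x⟫}

/-- `N` is a `κ`-smooth norm: its square `Φ` is `C¹` and satisfies
`Φ(x+h) ≤ Φ(x) + ⟨∇Φ(x),h⟩ + κ Φ(h)`. -/
def IsSmoothNorm {E : Type*} [NormedAddCommGroup E] [InnerProductSpace ℝ E] [CompleteSpace E]
    (κ : ℝ) (N : E → ℝ) : Prop :=
  IsNorm N ∧ ContDiff ℝ 1 (fun x => N x ^ 2) ∧
    ∀ x h, N (x + h) ^ 2 ≤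
      N x ^ 2 + ⟪gradient (fun z => N z ^ 2) x, h⟫ + κ * N h ^ 2

/-- `N` is a `(κ,ς)`-regular norm: within factor `ς` of a `κ`-smooth norm. -/
def IsRegularNorm {E : Type*} [NormedAddCommGroup E] [InnerProductSpace ℝ E] [CompleteSpace E]
    (κ ς : ℝ) (N : E → ℝ) : Prop :=
  ∃ M : E → ℝ, IsSmoothNorm κ M ∧ ∀ x, ς⁻¹ * M x ≤ N x ∧ N x ≤ ς * M x

/-!
(2) ⇒ (1) is the duality inequality `⟪h, y⟫ ≤ N h * dualNorm N y`, and (1) ⇒ (3) holds because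
`t ↦ f (x + t • h) - t * ⟪h, ∇f x⟫ - α / 2 * t ^ 2 * N h ^ 2` is antitone on `[0, 1]`.
For (3) ⇒ (2) fix `N u ≤ 1` and put `z = x + h - N h • u`: adding (3) at `x` (step `h`) and at
`x + h` (step `z - (x + h)`) to the convexity bound `f x + ⟪∇f x, z - x⟫ ≤ f z` gives
`⟪u, ∇f (x + h) - ∇f x⟫ ≤ α * N h` as long as `z ∈ V`. Openness of `V` guarantees this for all
short steps along the compact segment `[x, x + h]`, and summing over a fine subdivision gives it
for `h` itself.
-/

open Set

namespace IsNorm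

section Module

variable {F : Type*} [AddCommGroup F] [Module ℝ F] {N : F → ℝ}

theorem nonneg (hN : IsNorm N) (x : F) : 0 ≤ N x := hN.1 x

theorem eq_zero_iff (hN : IsNorm N) {x : F} : N x = 0 ↔ x = 0 := hN.2.1 x

theorem map_smul (hN : IsNorm N) (c : ℝ) (x : F) : N (c • x) = |c| * N x := hN.2.2.1 c x

theorem add_le (hN : IsNorm N) (x y : F) : N (x + y) ≤ N x + N y := hN.2.2.2 x y

theorem map_zero (hN : IsNorm N) : N 0 = 0 := hN.eq_zero_iff.mpr rfl

theorem pos (hN : IsNorm N) {x : F} (hx : x ≠ 0) : 0 < N x :=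
  (hN.nonneg x).lt_of_ne' (mt hN.eq_zero_iff.mp hx)

theorem map_smul_of_nonneg (hN : IsNorm N) {c : ℝ} (hc : 0 ≤ c) (x : F) : N (c • x) = c * N x := by
  rw [hN.map_smul, abs_of_nonneg hc]

theorem convexOn (hN : IsNorm N) : ConvexOn ℝ univ N := by
  refine ⟨convex_univ, fun x _ y _ a b ha hb _ => ?_⟩
  calc N (a • x + b • y) ≤ N (a • x) + N (b • y) := hN.add_le _ _
    _ = a * N x + b * N y := by rw [hN.map_smul_of_nonneg ha, hN.map_smul_of_nonneg hb]

end Module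

section FiniteDimensional

variable {E : Type*} [NormedAddCommGroup E] [NormedSpace ℝ E] [FiniteDimensional ℝ E] {N : E → ℝ}

theorem continuous (hN : IsNorm N) : Continuous N :=
  continuousOn_univ.mp (hN.convexOn.continuousOn isOpen_univ)

theorem exists_pos_mul_norm_le (hN : IsNorm N) : ∃ c, 0 < c ∧ ∀ x, c * ‖x‖ ≤ N x := by
  obtain ⟨c, hc, hcN⟩ := (isCompact_sphere (0 : E) 1).exists_forall_le'
    hN.continuous.continuousOn fun x hx => hN.pos (ne_zero_of_mem_unit_sphere ⟨x, hx⟩)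
  refine ⟨c, hc, fun x => ?_⟩
  rcases eq_or_ne x 0 with rfl | hx
  · simp [hN.map_zero]
  have hxpos : 0 < ‖x‖ := norm_pos_iff.mpr hx
  have := hcN (‖x‖⁻¹ • x) (by simp [norm_smul, hxpos.ne'])
  rw [hN.map_smul_of_nonneg (inv_nonneg.mpr hxpos.le), le_inv_mul_iff₀ hxpos] at this
  linarith

end FiniteDimensional

variable {E : Type*} [NormedAddCommGroup E] [InnerProductSpace ℝ E] [FiniteDimensional ℝ E]
  {N : E → ℝ}

theorem bddAbove_inner_of_le_one (hN : IsNorm N) (y : E) :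
    BddAbove {r | ∃ x, N x ≤ 1 ∧ r = ⟪y, x⟫} := by
  obtain ⟨c, hc, hcN⟩ := hN.exists_pos_mul_norm_le
  refine ⟨‖y‖ / c, ?_⟩
  rintro _ ⟨x, hx, rfl⟩
  calc ⟪y, x⟫ ≤ ‖y‖ * ‖x‖ := real_inner_le_norm y x
    _ ≤ ‖y‖ * (1 / c) := by
        gcongr
        rw [le_div_iff₀ hc]
        linarith [hcN x]
    _ = ‖y‖ / c := by ring

theorem inner_le_mul_dualNorm (hN : IsNorm N) (h y : E) : ⟪h, y⟫ ≤ N h * dualNorm N y := by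
  rcases eq_or_ne h 0 with rfl | hh
  · simp [hN.map_zero]
  have hpos := hN.pos hh
  have hmem : ⟪y, (N h)⁻¹ • h⟫ ∈ {r | ∃ x, N x ≤ 1 ∧ r = ⟪y, x⟫} :=
    ⟨(N h)⁻¹ • h, by rw [hN.map_smul_of_nonneg (inv_nonneg.mpr hpos.le), inv_mul_cancel₀ hpos.ne'],
      rfl⟩
  have := le_csSup (hN.bddAbove_inner_of_le_one y) hmem
  rwa [real_inner_smul_right, inv_mul_le_iff₀ hpos, real_inner_comm] at this

end IsNorm

section Gradient

variable {E : Type*} [NormedAddCommGroup E] [InnerProductSpace ℝ E] [CompleteSpace E]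
  {f : E → ℝ} {g x h : E} {t : ℝ}

theorem HasGradientAt.hasDerivAt_comp_add_smul (hf : HasGradientAt f g (x + t • h)) :
    HasDerivAt (fun s : ℝ => f (x + s • h)) ⟪g, h⟫ t := by
  have hline : HasDerivAt (fun s : ℝ => x + s • h) h t := by
    simpa using ((hasDerivAt_id t).smul_const h).const_add x
  exact (hasGradientAt_iff_hasFDerivAt.mp hf).comp_hasDerivAt t hline

theorem ConvexOn.add_inner_le_of_hasGradientAt {V : Set E} (hconv : ConvexOn ℝ V f)
    (hf : HasGradientAt f g x) (hx : x ∈ V) (hxh : x + h ∈ V) : f x + ⟪g, h⟫ ≤ f (x + h) := by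
  have hline : ConvexOn ℝ (Icc 0 1) fun s : ℝ => f (x + s • h) := by
    refine (hconv.comp_affineMap (AffineMap.lineMap x (x + h))).subset (fun s hs => ?_)
      (convex_Icc 0 1) |>.congr fun s _ => ?_
    · simpa [AffineMap.lineMap_apply_module', add_comm] using hconv.1.add_smul_mem hx hxh hs
    · simp [AffineMap.lineMap_apply_module', add_comm]
  have := hline.le_slope_of_hasDerivAt (left_mem_Icc.mpr zero_le_one)
    (right_mem_Icc.mpr zero_le_one) zero_lt_one (HasGradientAt.hasDerivAt_comp_add_smul (by simpa))
  simp only [slope_def_field, one_smul, zero_smul, add_zero, sub_zero, div_one] at this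
  linarith

end Gradient

theorem sub_le_of_forall_sub_le_mul {G : ℝ → ℝ} {L δ : ℝ} (hδ : 0 < δ)
    (hG : ∀ t ∈ Icc (0 : ℝ) 1, ∀ s ∈ Icc (0 : ℝ) 1, t ≤ s → s - t < δ → G s - G t ≤ L * (s - t)) :
    G 1 - G 0 ≤ L := by
  obtain ⟨K, hK⟩ := exists_nat_gt δ⁻¹
  have hKpos : (0 : ℝ) < K := (inv_pos.mpr hδ).trans hK
  have hstep : (K : ℝ)⁻¹ < δ := inv_lt_of_inv_lt₀ hδ hK
  have hnode : ∀ i ≤ K, (i / K : ℝ) ∈ Icc (0 : ℝ) 1 := fun i hi =>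
    ⟨by positivity, div_le_one_of_le₀ (by exact_mod_cast hi) hKpos.le⟩
  calc G 1 - G 0 = ∑ i ∈ Finset.range K, (G ((i + 1 : ℕ) / K) - G (i / K)) := by
        rw [Finset.sum_range_sub (fun i : ℕ => G (i / K))]
        simp [hKpos.ne']
    _ ≤ ∑ _i ∈ Finset.range K, L * (K : ℝ)⁻¹ := by
        refine Finset.sum_le_sum fun i hi => ?_
        have hi := Finset.mem_range.mp hi
        have hdiff : ((i + 1 : ℕ) / K : ℝ) - i / K = (K : ℝ)⁻¹ := by
          push_cast
          ring
        rw [← hdiff]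
        exact hG _ (hnode i hi.le) _ (hnode (i + 1) hi)
          (by gcongr; exact_mod_cast i.le_succ) (hdiff ▸ hstep)
    _ = L := by
        rw [Finset.sum_const, Finset.card_range, nsmul_eq_mul]
        field_simp

section Smoothness

variable {E : Type*} [NormedAddCommGroup E] [InnerProductSpace ℝ E] [CompleteSpace E]
  {N : E → ℝ} {V : Set E} {f : E → ℝ} {f' : E → E} {α : ℝ}

theorem le_add_inner_add_sq_of_inner_sub_le (hVc : Convex ℝ V) (hN : IsNorm N)
    (hf : ∀ x ∈ V, HasGradientAt f (f' x) x)
    (hmono : ∀ x h, x ∈ V → x + h ∈ V → ⟪h, f' (x + h) - f' x⟫ ≤ α * N h ^ 2)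
    {x h : E} (hx : x ∈ V) (hxh : x + h ∈ V) :
    f (x + h) ≤ f x + ⟪h, f' x⟫ + α / 2 * N h ^ 2 := by
  set φ : ℝ → ℝ := fun t => f (x + t • h) - t * ⟪h, f' x⟫ - α / 2 * N h ^ 2 * t ^ 2
  have hmem : ∀ t ∈ Icc (0 : ℝ) 1, x + t • h ∈ V := fun t ht => hVc.add_smul_mem hx hxh ht
  have hφ : ∀ t ∈ Icc (0 : ℝ) 1,
      HasDerivAt φ (⟪h, f' (x + t • h) - f' x⟫ - α * N h ^ 2 * t) t := by
    intro t ht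
    refine (((hf _ (hmem t ht)).hasDerivAt_comp_add_smul.sub
      ((hasDerivAt_id t).mul_const ⟪h, f' x⟫)).sub
        ((hasDerivAt_pow 2 t).const_mul (α / 2 * N h ^ 2))).congr_deriv ?_
    simp only [inner_sub_right, real_inner_comm h]
    ring
  have hanti : AntitoneOn φ (Icc 0 1) := by
    refine antitoneOn_of_hasDerivWithinAt_nonpos (convex_Icc 0 1)
      (fun t ht => (hφ t ht).continuousAt.continuousWithinAt)
      (fun t ht => (hφ t (interior_subset ht)).hasDerivWithinAt) fun t ht => ?_
    rw [interior_Icc] at ht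
    have := hmono x (t • h) hx (hmem t (Ioo_subset_Icc_self ht))
    rw [real_inner_smul_left, hN.map_smul_of_nonneg ht.1.le] at this
    nlinarith [ht.1]
  have := hanti (left_mem_Icc.mpr zero_le_one) (right_mem_Icc.mpr zero_le_one) zero_le_one
  simp only [φ, zero_smul, one_smul, add_zero, zero_mul, one_mul, sub_zero, one_pow, mul_one,
    zero_pow two_ne_zero] at this
  linarith

theorem inner_sub_le_of_le_add_inner_add_sq (hα : 0 ≤ α) (hN : IsNorm N)
    (hf : ∀ x ∈ V, HasGradientAt f (f' x) x) (hconv : ConvexOn ℝ V f)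
    (hquad : ∀ x h, x ∈ V → x + h ∈ V → f (x + h) ≤ f x + ⟪h, f' x⟫ + α / 2 * N h ^ 2)
    {a e u : E} (ha : a ∈ V) (hae : a + e ∈ V) (hz : a + e - N e • u ∈ V) (hu : N u ≤ 1) :
    ⟪u, f' (a + e) - f' a⟫ ≤ α * N e := by
  rcases eq_or_ne e 0 with rfl | he
  · simp [hN.map_zero]
  have hpos := hN.pos he
  have h₁ := hquad a e ha hae
  have h₂ := hquad (a + e) (-(N e • u)) hae (by rwa [← sub_eq_add_neg])
  have h₃ := hconv.add_inner_le_of_hasGradientAt (hf a ha) ha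
    (show a + (e - N e • u) ∈ V by rwa [← add_sub_assoc])
  rw [← sub_eq_add_neg, add_sub_assoc, ← neg_smul, hN.map_smul, abs_neg, abs_of_pos hpos,
    neg_smul, inner_neg_left, real_inner_smul_left] at h₂
  rw [inner_sub_right, real_inner_smul_right, real_inner_comm u, real_inner_comm e] at h₃
  have hNu : N u ^ 2 ≤ 1 := pow_le_one₀ (hN.nonneg u) hu
  have key : N e * ⟪u, f' (a + e) - f' a⟫ ≤ N e * (α * N e) := by
    rw [inner_sub_right]
    nlinarith [mul_le_mul_of_nonneg_left hNu (mul_nonneg hα (sq_nonneg (N e)))]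
  exact le_of_mul_le_mul_left key hpos

theorem dualNorm_sub_le_of_le_add_inner_add_sq (hVo : IsOpen V) (hVc : Convex ℝ V) (hα : 0 ≤ α)
    (hN : IsNorm N) (hf : ∀ x ∈ V, HasGradientAt f (f' x) x) (hconv : ConvexOn ℝ V f)
    (hquad : ∀ x h, x ∈ V → x + h ∈ V → f (x + h) ≤ f x + ⟪h, f' x⟫ + α / 2 * N h ^ 2)
    {x h : E} (hx : x ∈ V) (hxh : x + h ∈ V) :
    dualNorm N (f' (x + h) - f' x) ≤ α * N h := by
  refine csSup_le ⟨0, 0, by simp [hN.map_zero]⟩ ?_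
  rintro _ ⟨u, hu, rfl⟩
  set γ : ℝ → E := fun t => x + t • h
  have hγV : γ '' Icc 0 1 ⊆ V := by
    rintro _ ⟨t, ht, rfl⟩
    exact hVc.add_smul_mem hx hxh ht
  obtain ⟨δ, hδ, hδV⟩ :=
    (isCompact_Icc.image (by fun_prop : Continuous γ)).exists_thickening_subset_open hVo hγV
  set c := N h * ‖u‖ + 1
  have hc : 0 < c := by positivity [hN.nonneg h]
  have hlocal : ∀ t ∈ Icc (0 : ℝ) 1, ∀ s ∈ Icc (0 : ℝ) 1, t ≤ s → s - t < δ / c →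
      ⟪u, f' (γ s)⟫ - ⟪u, f' (γ t)⟫ ≤ α * N h * (s - t) := by
    intro t ht s hs hts hst
    have hshift : γ t + (s - t) • h = γ s := by simp only [γ, sub_smul]; abel
    have hNe : N ((s - t) • h) = (s - t) * N h := hN.map_smul_of_nonneg (sub_nonneg.mpr hts) h
    have hz : γ s - N ((s - t) • h) • u ∈ V := by
      refine hδV (Metric.mem_thickening_iff.mpr ⟨γ s, ⟨s, hs, rfl⟩, ?_⟩)
      rw [dist_eq_norm, sub_sub_cancel_left, norm_neg, norm_smul, hNe, Real.norm_eq_abs,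
        abs_of_nonneg (mul_nonneg (sub_nonneg.mpr hts) (hN.nonneg h))]
      calc (s - t) * N h * ‖u‖ ≤ (s - t) * c := by
            rw [mul_assoc]; gcongr; linarith
        _ < δ := (lt_div_iff₀ hc).mp hst
    have := inner_sub_le_of_le_add_inner_add_sq hα hN hf hconv hquad (hγV ⟨t, ht, rfl⟩)
      (hshift ▸ hγV ⟨s, hs, rfl⟩) (hshift ▸ hz) hu
    rw [hshift, hNe, inner_sub_right] at this
    linarith
  have := sub_le_of_forall_sub_le_mul (div_pos hδ hc) hlocal
  simp only [γ, zero_smul, one_smul, add_zero] at this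
  rw [real_inner_comm, inner_sub_right]
  linarith

end Smoothness

theorem stmt_0_general {n : ℕ} (N : EuclideanSpace ℝ (Fin n) → ℝ) (hN : IsNorm N)
    (V : Set (EuclideanSpace ℝ (Fin n))) (hVo : IsOpen V)
    (hVc : Convex ℝ V) (α : ℝ) (hα : 0 ≤ α)
    (f : EuclideanSpace ℝ (Fin n) → ℝ)
    (f' : EuclideanSpace ℝ (Fin n) → EuclideanSpace ℝ (Fin n))
    (hf : ∀ x ∈ V, HasGradientAt f (f' x) x)
    (hconv : ConvexOn ℝ V f) :
    List.TFAE
      [∀ x h, x ∈ V → x + h ∈ V → ⟪h, f' (x + h) - f' x⟫ ≤ α * N h ^ 2,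
       ∀ x h, x ∈ V → x + h ∈ V → dualNorm N (f' (x + h) - f' x) ≤ α * N h,
       ∀ x h, x ∈ V → x + h ∈ V →
         f (x + h) ≤ f x + ⟪h, f' x⟫ + α / 2 * N h ^ 2] := by
  tfae_have 1 → 3 := fun hmono _ _ hx hxh =>
    le_add_inner_add_sq_of_inner_sub_le hVc hN hf hmono hx hxh
  tfae_have 3 → 2 := fun hquad _ _ hx hxh =>
    dualNorm_sub_le_of_le_add_inner_add_sq hVo hVc hα hN hf hconv hquad hx hxh
  tfae_have 2 → 1 := fun hlip x h hx hxh =>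
    calc ⟪h, f' (x + h) - f' x⟫ ≤ N h * dualNorm N (f' (x + h) - f' x) :=
          hN.inner_le_mul_dualNorm h _
      _ ≤ N h * (α * N h) := mul_le_mul_of_nonneg_left (hlip x h hx hxh) (hN.nonneg h)
      _ = α * N h ^ 2 := by ring
  tfae_finish

/-- equivalence of the three smoothness characterizations for a
`C¹` convex function on a nonempty open convex set. -/
theorem stmt_0 {n : ℕ} (N : EuclideanSpace ℝ (Fin n) → ℝ) (hN : IsNorm N)
    (V : Set (EuclideanSpace ℝ (Fin n))) (hVne : V.Nonempty) (hVo : IsOpen V)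
    (hVc : Convex ℝ V) (α : ℝ) (hα : 0 ≤ α)
    (f : EuclideanSpace ℝ (Fin n) → ℝ)
    (f' : EuclideanSpace ℝ (Fin n) → EuclideanSpace ℝ (Fin n))
    (hf : ∀ x ∈ V, HasGradientAt f (f' x) x) (hf'c : ContinuousOn f' V)
    (hconv : ConvexOn ℝ V f) :
    List.TFAE
      [∀ x h, x ∈ V → x + h ∈ V → ⟪h, f' (x + h) - f' x⟫ ≤ α * N h ^ 2,
       ∀ x h, x ∈ V → x + h ∈ V → dualNorm N (f' (x + h) - f' x) ≤ α * N h,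
       ∀ x h, x ∈ V → x + h ∈ V →
         f (x + h) ≤ f x + ⟪h, f' x⟫ + α / 2 * N h ^ 2] :=
  stmt_0_general N hN V hVo hVc α hα f f' hf hconv
end

section
/- For 2 ≤ p < ∞, the norm ‖·‖_p on ℝⁿ is (p−1)-smooth: the function Φ(x) = ‖x‖_p² is continuously differentiable and satisfies Φ(x+h) ≤ Φ(x) + ⟨∇Φ(x), h⟩ + (p−1)Φ(h) for all x, h ∈ ℝⁿ. -/
open scoped RealInnerProductSpace
open Real Matrix

/-!
Write `‖x‖_p² = S(x) ^ (2/p)` with `S(x) = ∑ |xᵢ|^p`. Away from the origin the chain rule gives the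
gradient `2 S^(2/p-1) (|xᵢ|^(p-2) xᵢ)ᵢ`; at the origin `‖x‖_p² = O(‖x‖²)` and the gradient is
`O(S^(1/p))`, so the function is `C¹`. For the inequality, restrict to the line `y = x + t h`.
Wherever `y ≠ 0` (all `t` but at most one) the second derivative is
`2(2-p) S^(2/p-2) A² + 2(p-1) S^(2/p-1) ∑ |yᵢ|^(p-2) hᵢ²` with `A = ∑ |yᵢ|^(p-2) yᵢ hᵢ`; the first
term is `≤ 0` and Hölder with exponents `p/(p-2)` and `p/2` bounds the second by `2(p-1)‖h‖_p²`.
The mean value theorem then yields the quadratic upper bound along the line.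
-/

lemma le_add_deriv_add_of_hasDerivAt_deriv_le {g D : ℝ → ℝ} {t₀ K : ℝ}
    (hg : ∀ t, HasDerivAt g (D t) t) (hD : Continuous D)
    (hD' : ∀ t ≠ t₀, ∃ d, HasDerivAt D d t ∧ d ≤ 2 * K) :
    g 1 ≤ g 0 + D 0 + K := by
  have hF : ∀ t ≠ t₀, ∃ d, HasDerivAt (fun t => D t - 2 * K * t) d t ∧ d ≤ 0 := by
    intro t ht
    obtain ⟨d, hd, hdK⟩ := hD' t ht
    exact ⟨d - 2 * K, hd.fun_sub ((hasDerivAt_id' t).const_mul (2 * K) |>.congr_deriv (mul_one _)),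
      by linarith⟩
  have hside : ∀ s : Set ℝ, Convex ℝ s → t₀ ∉ interior s →
      AntitoneOn (fun t => D t - 2 * K * t) s := by
    intro s hs ht₀
    refine antitoneOn_of_deriv_nonpos hs (by fun_prop) (fun t ht => ?_) (fun t ht => ?_)
    · obtain ⟨d, hd, -⟩ := hF t (ne_of_mem_of_not_mem ht ht₀)
      exact hd.differentiableAt.differentiableWithinAt
    · obtain ⟨d, hd, hd0⟩ := hF t (ne_of_mem_of_not_mem ht ht₀)
      exact hd.deriv ▸ hd0
  have hanti : Antitone fun t => D t - 2 * K * t :=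
    (hside _ (convex_Iic t₀) (by simp)).Iic_union_Ici (hside _ (convex_Ici t₀) (by simp))
  have hq : ∀ t, HasDerivAt (fun t => g t - K * t ^ 2) (D t - 2 * K * t) t := fun t =>
    (hg t).sub ((hasDerivAt_pow 2 t).const_mul K |>.congr_deriv (by ring))
  obtain ⟨c, hc, hslope⟩ := exists_hasDerivAt_eq_slope _ _ zero_lt_one
    (HasDerivAt.continuousOn fun t _ => hq t) (fun t _ => hq t)
  have := hanti hc.1.le
  norm_num at hslope this
  linarith

lemma hasDerivAt_const_add_smul {E : Type*} [NormedAddCommGroup E] [NormedSpace ℝ E]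
    (x v : E) (t : ℝ) : HasDerivAt (fun t : ℝ => x + t • v) v t :=
  ((hasDerivAt_id t).smul_const v).const_add x |>.congr_deriv (one_smul ℝ v)

noncomputable def signedPow (p y : ℝ) : ℝ := |y| ^ (p - 2) * y

lemma hasDerivAt_abs_rpow_eq_signedPow {p : ℝ} (hp : 1 < p) (y : ℝ) :
    HasDerivAt (fun y => |y| ^ p) (p * signedPow p y) y := by
  simpa only [signedPow, mul_assoc] using hasDerivAt_abs_rpow y hp

lemma abs_signedPow {p : ℝ} (hp : 1 < p) (y : ℝ) : |signedPow p y| = |y| ^ (p - 1) := by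
  rw [signedPow, abs_mul, abs_of_nonneg (by positivity), ← Real.rpow_add_one' (abs_nonneg y)]
  · ring_nf
  · linarith

lemma continuous_abs_rpow {q : ℝ} (hq : 0 ≤ q) : Continuous fun y : ℝ => |y| ^ q :=
  continuous_abs.rpow_const fun _ => Or.inr hq

lemma continuous_signedPow {p : ℝ} (hp : 2 ≤ p) : Continuous (signedPow p) :=
  (continuous_abs_rpow (by linarith)).mul continuous_id

lemma hasDerivAt_signedPow {p : ℝ} (hp : 2 ≤ p) (y : ℝ) :
    HasDerivAt (signedPow p) ((p - 1) * |y| ^ (p - 2)) y := by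
  refine hasDerivAt_of_hasDerivAt_of_ne' (x := 0) (g := fun y => (p - 1) * |y| ^ (p - 2))
    (fun z hz => ?_) (continuous_signedPow hp).continuousAt
    ((continuous_abs_rpow (by linarith)).const_mul _).continuousAt y
  have hderiv := ((hasDerivAt_abs hz).rpow_const (p := p - 2) (Or.inl (abs_ne_zero.2 hz))).mul
    (hasDerivAt_id z)
  refine hderiv.congr_deriv ?_
  have hpow : |z| ^ (p - 2 - 1) * |z| = |z| ^ (p - 2) := by
    rw [← Real.rpow_add_one (abs_ne_zero.2 hz)]; ring_nf
  calc _ = (p - 2) * (|z| ^ (p - 2 - 1) * ((SignType.sign z : ℝ) * z)) + |z| ^ (p - 2) := by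
        simp only [id]; ring
    _ = _ := by rw [sign_mul_self, hpow]; ring

section

variable {ι : Type*} [Fintype ι] {p : ℝ}

lemma inner_toLp_eq_sum (f : ι → ℝ) (h : EuclideanSpace ℝ ι) :
    ⟪WithLp.toLp 2 f, h⟫ = ∑ i, f i * h i := by
  simp [PiLp.inner_apply, mul_comm]

noncomputable def powSum (p : ℝ) (x : EuclideanSpace ℝ ι) : ℝ := ∑ i, |x i| ^ p

lemma powSum_nonneg (p : ℝ) (x : EuclideanSpace ℝ ι) : 0 ≤ powSum p x :=
  Finset.sum_nonneg fun _ _ => by positivity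

lemma powSum_zero (hp : p ≠ 0) : powSum p (0 : EuclideanSpace ℝ ι) = 0 := by
  simp [powSum, Real.zero_rpow hp]

lemma powSum_pos {x : EuclideanSpace ℝ ι} (hx : x ≠ 0) : 0 < powSum p x := by
  obtain ⟨i, hi⟩ : ∃ i, x i ≠ 0 := by
    by_contra! h
    exact hx (PiLp.ext h)
  exact Finset.sum_pos' (fun _ _ => by positivity) ⟨i, Finset.mem_univ i, by positivity⟩

lemma abs_apply_le_powSum_rpow (hp : 0 < p) (x : EuclideanSpace ℝ ι) (i : ι) :
    |x i| ≤ powSum p x ^ p⁻¹ := by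
  have hle : |x i| ^ p ≤ powSum p x :=
    Finset.single_le_sum (f := fun j => |x j| ^ p) (fun _ _ => by positivity) (Finset.mem_univ i)
  calc |x i| = (|x i| ^ p) ^ p⁻¹ := (Real.rpow_rpow_inv (abs_nonneg _) hp.ne').symm
    _ ≤ powSum p x ^ p⁻¹ := by gcongr

lemma powSum_le_card_mul_norm_rpow (hp : 0 ≤ p) (x : EuclideanSpace ℝ ι) :
    powSum p x ≤ Fintype.card ι * ‖x‖ ^ p := by
  calc powSum p x ≤ ∑ _i : ι, ‖x‖ ^ p :=
        Finset.sum_le_sum fun i _ => by gcongr; exact PiLp.norm_apply_le x i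
    _ = _ := by simp

lemma hasFDerivAt_powSum (hp : 1 < p) (x : EuclideanSpace ℝ ι) :
    HasFDerivAt (powSum p)
      (InnerProductSpace.toDual ℝ _ (WithLp.toLp 2 fun i => p * signedPow p (x i))) x := by
  have hsum := HasFDerivAt.fun_sum (u := Finset.univ) fun i _ =>
    (hasDerivAt_abs_rpow_eq_signedPow hp (x i)).comp_hasFDerivAt x
      (EuclideanSpace.proj (𝕜 := ℝ) (ι := ι) i).hasFDerivAt
  refine hsum.congr_fderiv (ContinuousLinearMap.ext fun h => ?_)
  simp [inner_toLp_eq_sum]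

noncomputable def lpNormSq (p : ℝ) (x : EuclideanSpace ℝ ι) : ℝ := powSum p x ^ (2 / p)

noncomputable def lpNormSqGrad (p : ℝ) (x : EuclideanSpace ℝ ι) : EuclideanSpace ℝ ι :=
  WithLp.toLp 2 fun i => 2 * powSum p x ^ (2 / p - 1) * signedPow p (x i)

lemma lpNormSq_nonneg (p : ℝ) (x : EuclideanSpace ℝ ι) : 0 ≤ lpNormSq p x :=
  Real.rpow_nonneg (powSum_nonneg p x) _

lemma lpNormSq_zero (hp : 0 < p) : lpNormSq p (0 : EuclideanSpace ℝ ι) = 0 := by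
  rw [lpNormSq, powSum_zero hp.ne', Real.zero_rpow (by positivity)]

lemma lpNormSqGrad_zero : lpNormSqGrad p (0 : EuclideanSpace ℝ ι) = 0 := by
  ext i; simp [lpNormSqGrad, signedPow]

lemma lpNormSq_le_card_rpow_mul_norm_sq (hp : 0 < p) (x : EuclideanSpace ℝ ι) :
    lpNormSq p x ≤ (Fintype.card ι : ℝ) ^ (2 / p) * ‖x‖ ^ 2 := by
  calc lpNormSq p x ≤ (Fintype.card ι * ‖x‖ ^ p) ^ (2 / p) := by
        unfold lpNormSq
        gcongr
        exacts [powSum_nonneg p x, powSum_le_card_mul_norm_rpow hp.le x]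
    _ = _ := by
        rw [Real.mul_rpow (by positivity) (by positivity), ← Real.rpow_mul (norm_nonneg x),
          mul_div_cancel₀ _ hp.ne', Real.rpow_two]

lemma hasFDerivAt_lpNormSq (hp : 2 ≤ p) (x : EuclideanSpace ℝ ι) :
    HasFDerivAt (lpNormSq p) (InnerProductSpace.toDual ℝ _ (lpNormSqGrad p x)) x := by
  have hp0 : 0 < p := by linarith
  rcases eq_or_ne x 0 with rfl | hx
  · rw [lpNormSqGrad_zero, map_zero, hasFDerivAt_iff_isLittleO_nhds_zero]
    refine Asymptotics.IsBigO.trans_isLittleO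
      (.of_bound ((Fintype.card ι : ℝ) ^ (2 / p)) (.of_forall fun h => ?_))
      (Asymptotics.isLittleO_norm_pow_id one_lt_two)
    simpa [lpNormSq_zero hp0, abs_of_nonneg (lpNormSq_nonneg p h)] using
      lpNormSq_le_card_rpow_mul_norm_sq hp0 h
  · refine (hasFDerivAt_powSum (by linarith) x).rpow_const (Or.inl (powSum_pos hx).ne')
      |>.congr_fderiv (ContinuousLinearMap.ext fun h => ?_)
    simp only [lpNormSqGrad, FunLike.coe_smul, Pi.smul_apply,
      InnerProductSpace.toDual_apply_apply, inner_toLp_eq_sum, smul_eq_mul, Finset.mul_sum]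
    refine Finset.sum_congr rfl fun i _ => ?_
    field_simp

lemma abs_lpNormSqGrad_apply_le (hp : 1 < p) (x : EuclideanSpace ℝ ι) (i : ι) :
    |lpNormSqGrad p x i| ≤ 2 * powSum p x ^ p⁻¹ := by
  have hp0 : 0 < p := by linarith
  rcases eq_or_ne x 0 with rfl | hx
  · simp [lpNormSqGrad_zero, powSum_zero hp0.ne', Real.zero_rpow (inv_ne_zero hp0.ne')]
  have hS := powSum_pos (p := p) hx
  have hcoord : |x i| ^ (p - 1) ≤ (powSum p x ^ p⁻¹) ^ (p - 1) := by
    gcongr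
    exact abs_apply_le_powSum_rpow hp0 x i
  calc |lpNormSqGrad p x i| = 2 * powSum p x ^ (2 / p - 1) * |x i| ^ (p - 1) := by
        simp [lpNormSqGrad, abs_mul, abs_signedPow hp, abs_of_pos (Real.rpow_pos_of_pos hS _)]
    _ ≤ 2 * powSum p x ^ (2 / p - 1) * (powSum p x ^ p⁻¹) ^ (p - 1) := by gcongr
    _ = 2 * powSum p x ^ p⁻¹ := by
        rw [← Real.rpow_mul hS.le, mul_assoc, ← Real.rpow_add hS]
        congr 2
        field_simp
        ring

lemma continuous_lpNormSqGrad (hp : 2 ≤ p) : Continuous (lpNormSqGrad (ι := ι) p) := by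
  have hp0 : 0 < p := by linarith
  have hpowSum : Continuous (powSum (ι := ι) p) :=
    continuous_iff_continuousAt.2 fun x => (hasFDerivAt_powSum (by linarith) x).continuousAt
  refine (PiLp.continuous_toLp 2 (fun _ : ι => ℝ)).comp
    (continuous_pi fun i => continuous_iff_continuousAt.2 fun x => ?_)
  rcases eq_or_ne x 0 with rfl | hx
  · have hlim : Filter.Tendsto (fun x => 2 * powSum p x ^ p⁻¹)
        (nhds (0 : EuclideanSpace ℝ ι)) (nhds 0) := by
      have := ((hpowSum.rpow_const fun _ => Or.inr (inv_nonneg.2 hp0.le)).const_mul 2).tendsto 0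
      simpa [powSum_zero hp0.ne', Real.zero_rpow (inv_ne_zero hp0.ne')] using this
    show Filter.Tendsto (fun x => lpNormSqGrad p x i) _ (nhds (lpNormSqGrad p 0 i))
    rw [lpNormSqGrad_zero]
    exact squeeze_zero_norm (fun x => abs_lpNormSqGrad_apply_le (by linarith) x i) hlim
  · exact (((hpowSum.continuousAt.rpow_const (Or.inl (powSum_pos hx).ne')).const_mul 2).mul
      ((continuous_signedPow hp).comp (PiLp.continuous_apply 2 _ i)).continuousAt)

lemma contDiff_lpNormSq (hp : 2 ≤ p) : ContDiff ℝ 1 (lpNormSq (ι := ι) p) :=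
  contDiff_one_iff_hasFDerivAt.2 ⟨_,
    (InnerProductSpace.toDual ℝ _).continuous.comp (continuous_lpNormSqGrad hp),
    hasFDerivAt_lpNormSq hp⟩

lemma inner_lpNormSqGrad (y h : EuclideanSpace ℝ ι) :
    ⟪lpNormSqGrad p y, h⟫ = 2 * powSum p y ^ (2 / p - 1) * ∑ i, signedPow p (y i) * h i := by
  simp only [lpNormSqGrad, inner_toLp_eq_sum, Finset.mul_sum, mul_assoc]

lemma hasDerivAt_powSum_line (hp : 1 < p) (x h : EuclideanSpace ℝ ι) (t : ℝ) :
    HasDerivAt (fun t => powSum p (x + t • h)) (p * ∑ i, signedPow p ((x + t • h) i) * h i) t := by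
  have := (hasFDerivAt_powSum hp (x + t • h)).comp_hasDerivAt t (hasDerivAt_const_add_smul x h t)
  simpa [Function.comp_def, inner_toLp_eq_sum, Finset.mul_sum, mul_assoc] using this

lemma hasDerivAt_sum_signedPow_line (hp : 2 ≤ p) (x h : EuclideanSpace ℝ ι) (t : ℝ) :
    HasDerivAt (fun t => ∑ i, signedPow p ((x + t • h) i) * h i)
      ((p - 1) * ∑ i, |(x + t • h) i| ^ (p - 2) * h i ^ 2) t := by
  rw [Finset.mul_sum]
  refine HasDerivAt.fun_sum fun i _ => ?_
  have hcoord : HasDerivAt (fun t : ℝ => x i + t * h i) (h i) t :=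
    ((hasDerivAt_id t).mul_const (h i)).const_add (x i) |>.congr_deriv (one_mul _)
  simpa [mul_assoc, sq] using ((hasDerivAt_signedPow hp _).comp t hcoord).mul_const (h i)

lemma sum_abs_rpow_mul_sq_le (hp : 2 ≤ p) (y h : EuclideanSpace ℝ ι) :
    ∑ i, |y i| ^ (p - 2) * h i ^ 2 ≤ powSum p y ^ ((p - 2) / p) * powSum p h ^ (2 / p) := by
  rcases hp.eq_or_lt with rfl | hp
  · simp [powSum]
  have hpq : Real.HolderConjugate (p / (p - 2)) (p / 2) := by
    rw [Real.holderConjugate_iff]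
    constructor
    · rw [lt_div_iff₀ (by linarith)]; linarith
    · field_simp; ring
  have hholder := Real.inner_le_Lp_mul_Lq_of_nonneg Finset.univ hpq
    (f := fun i => |y i| ^ (p - 2)) (g := fun i => h i ^ 2)
    (fun _ _ => by positivity) (fun _ _ => by positivity)
  convert hholder using 3
  · refine Finset.sum_congr rfl fun i _ => ?_
    rw [← Real.rpow_mul (abs_nonneg _), mul_div_cancel₀ _ (by linarith)]
  · field_simp
  · refine Finset.sum_congr rfl fun i _ => ?_
    rw [← sq_abs, ← Real.rpow_two, ← Real.rpow_mul (abs_nonneg _), mul_div_cancel₀ _ two_ne_zero]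
  · field_simp

lemma exists_hasDerivAt_inner_lpNormSqGrad_line_le (hp : 2 ≤ p) (x h : EuclideanSpace ℝ ι)
    {t : ℝ} (hxth : x + t • h ≠ 0) :
    ∃ d, HasDerivAt (fun t => ⟪lpNormSqGrad p (x + t • h), h⟫) d t ∧
      d ≤ 2 * ((p - 1) * lpNormSq p h) := by
  have hp0 : 0 < p := by linarith
  set y := x + t • h
  set S := powSum p y
  set A := ∑ i, signedPow p (y i) * h i
  set B := ∑ i, |y i| ^ (p - 2) * h i ^ 2
  have hS : 0 < S := powSum_pos hxth
  have hSpow : HasDerivAt (fun t => powSum p (x + t • h) ^ (2 / p - 1))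
      ((2 / p - 1) * S ^ (2 / p - 2) * (p * A)) t := by
    refine (hasDerivAt_powSum_line (by linarith) x h t).rpow_const (Or.inl hS.ne')
      |>.congr_deriv ?_
    rw [show 2 / p - 1 - 1 = 2 / p - 2 by ring]
    ring
  refine ⟨2 * ((2 / p - 1) * S ^ (2 / p - 2) * (p * A)) * A + 2 * S ^ (2 / p - 1) * ((p - 1) * B),
    ?_, ?_⟩
  · simp_rw [inner_lpNormSqGrad]
    exact (hSpow.const_mul 2).mul (hasDerivAt_sum_signedPow_line hp x h t)
  · have hfirst : 2 * ((2 / p - 1) * S ^ (2 / p - 2) * (p * A)) * A ≤ 0 := by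
      rw [show 2 * ((2 / p - 1) * S ^ (2 / p - 2) * (p * A)) * A
          = (4 - 2 * p) * (S ^ (2 / p - 2) * A ^ 2) by field_simp; ring]
      exact mul_nonpos_of_nonpos_of_nonneg (by linarith) (by positivity)
    have hsecond : 2 * S ^ (2 / p - 1) * ((p - 1) * B) ≤ 2 * ((p - 1) * lpNormSq p h) :=
      calc 2 * S ^ (2 / p - 1) * ((p - 1) * B)
          ≤ 2 * S ^ (2 / p - 1) * ((p - 1) * (S ^ ((p - 2) / p) * lpNormSq p h)) := by
            gcongr
            · linarith
            · exact sum_abs_rpow_mul_sq_le hp y h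
        _ = 2 * ((p - 1) * (S ^ (2 / p - 1 + (p - 2) / p) * lpNormSq p h)) := by
            rw [Real.rpow_add hS]; ring
        _ = 2 * ((p - 1) * lpNormSq p h) := by
            rw [show 2 / p - 1 + (p - 2) / p = 0 by field_simp; ring, Real.rpow_zero, one_mul]
    linarith

lemma exists_forall_ne_add_smul_ne_zero {E : Type*} [AddCommGroup E] [Module ℝ E] (x : E)
    {h : E} (hh : h ≠ 0) : ∃ t₀ : ℝ, ∀ t ≠ t₀, x + t • h ≠ 0 := by
  by_cases hzero : ∃ t₀ : ℝ, x + t₀ • h = 0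
  · obtain ⟨t₀, ht₀⟩ := hzero
    exact ⟨t₀, fun t ht hzt => ht (smul_left_injective ℝ hh (add_left_cancel (hzt.trans ht₀.symm)))⟩
  · exact ⟨0, fun t _ => not_exists.1 hzero t⟩

theorem lpNormSq_add_le (hp : 2 ≤ p) (x h : EuclideanSpace ℝ ι) :
    lpNormSq p (x + h) ≤ lpNormSq p x + ⟪lpNormSqGrad p x, h⟫ + (p - 1) * lpNormSq p h := by
  rcases eq_or_ne h 0 with rfl | hh
  · simp [lpNormSq_zero (by linarith : 0 < p)]
  obtain ⟨t₀, ht₀⟩ := exists_forall_ne_add_smul_ne_zero x hh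
  have hg : ∀ t : ℝ, HasDerivAt (fun t => lpNormSq p (x + t • h))
      ⟪lpNormSqGrad p (x + t • h), h⟫ t := fun t =>
    (hasFDerivAt_lpNormSq hp _).comp_hasDerivAt t (hasDerivAt_const_add_smul x h t)
  have hD : Continuous fun t : ℝ => ⟪lpNormSqGrad p (x + t • h), h⟫ :=
    ((continuous_lpNormSqGrad hp).comp (by fun_prop)).inner continuous_const
  simpa using le_add_deriv_add_of_hasDerivAt_deriv_le hg hD
    fun t ht => exists_hasDerivAt_inner_lpNormSqGrad_line_le hp x h (ht₀ t ht)

lemma lpNormSq_eq (x : EuclideanSpace ℝ ι) :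
    lpNormSq p x = ((∑ i, |x i| ^ p) ^ (1 / p)) ^ 2 := by
  rw [lpNormSq, powSum, ← Real.rpow_natCast, ← Real.rpow_mul (by positivity)]
  ring_nf

lemma gradient_lpNormSq (hp : 2 ≤ p) (x : EuclideanSpace ℝ ι) :
    gradient (lpNormSq p) x = lpNormSqGrad p x :=
  (hasGradientAt_iff_hasFDerivAt.2 (hasFDerivAt_lpNormSq hp x)).gradient

end

/-- for `2 ≤ p < ∞` the norm `‖·‖_p` on `ℝⁿ` is `(p-1)`-smooth. -/
theorem stmt_5 {n : ℕ} (p : ℝ) (hp : 2 ≤ p)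
    (Φ : EuclideanSpace ℝ (Fin n) → ℝ)
    (hΦ : ∀ x, Φ x = ((∑ i, |x i| ^ p) ^ (1 / p)) ^ 2) :
    ContDiff ℝ 1 Φ ∧
      ∀ x h, Φ (x + h) ≤ Φ x + ⟪gradient Φ x, h⟫ + (p - 1) * Φ h := by
  obtain rfl : Φ = lpNormSq p := funext fun x => by rw [hΦ, lpNormSq_eq]
  refine ⟨contDiff_lpNormSq hp, fun x h => ?_⟩
  rw [gradient_lpNormSq hp]
  exact lpNormSq_add_le hp x h
end

section
/- Moreover, in the setting of the partial-minimization lemma: if u ∈ ℝᵖ and y ∈ Argmin_{y'} Ψ(u,y'), then ∇Ψ̄(u) = ∇_u Ψ(u,y), and this value does not depend on the choice of the minimizer y. -/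
open scoped RealInnerProductSpace
open Real Matrix

/-!
Danskin's envelope argument. By convexity, the tangent hyperplane of `Ψ` at `(u, y)` is a global
minorant of `Ψ`; since `y` minimizes `Ψ(u, ·)`, the `y`-part of `∇Ψ(u, y)` vanishes, so this
minorant `Ψ(u, y) + ⟪g, u' - u⟫`, where `g = ∇ᵤΨ(u, y)`, does not depend on `y'` and therefore
also bounds `Ψ̄(u')`. From above, `Ψ̄(u') ≤ Ψ(u', y)`, with equality at `u' = u`. So `Ψ̄` is
squeezed between two functions with the same first-order expansion at `u`.
-/

theorem ConvexOn.affine_le_of_hasFDerivAt {E : Type*} [NormedAddCommGroup E] [NormedSpace ℝ E]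
    {s : Set E} {f : E → ℝ} (hf : ConvexOn ℝ s f) {x z : E} (hx : x ∈ s) (hz : z ∈ s)
    {f' : E →L[ℝ] ℝ} (hd : HasFDerivAt f f' x) : f x + f' (z - x) ≤ f z := by
  have hline :
      ConvexOn ℝ (AffineMap.lineMap (k := ℝ) x z ⁻¹' s) (f ∘ AffineMap.lineMap (k := ℝ) x z) :=
    hf.comp_affineMap _
  have hderiv : HasDerivAt (f ∘ AffineMap.lineMap (k := ℝ) x z) (f' (z - x)) (0 : ℝ) := by
    refine HasFDerivAt.comp_hasDerivAt _ ?_ AffineMap.hasDerivAt_lineMap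
    simpa using hd
  have hslope := hline.le_slope_of_hasDerivAt (by simpa using hx) (by simpa using hz) zero_lt_one
    hderiv
  simp only [slope_def_field, Function.comp_apply, AffineMap.lineMap_apply_zero,
    AffineMap.lineMap_apply_one, sub_zero, div_one] at hslope
  linarith

theorem HasFDerivAt.of_le_of_affine_le {E : Type*} [NormedAddCommGroup E] [NormedSpace ℝ E]
    {φ f : E → ℝ} {f' : E →L[ℝ] ℝ} {x : E} (hf : HasFDerivAt f f' x) (hφx : φ x = f x)
    (hle : ∀ x', φ x' ≤ f x') (hge : ∀ x', φ x + f' (x' - x) ≤ φ x') :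
    HasFDerivAt φ f' x := by
  rw [hasFDerivAt_iff_isLittleO_nhds_zero] at hf ⊢
  refine (Asymptotics.isBigO_of_le _ fun h => ?_).trans_isLittleO hf
  have h₁ := hle (x + h)
  have h₂ := hge (x + h)
  rw [add_sub_cancel_left] at h₂
  rw [Real.norm_eq_abs, Real.norm_eq_abs]
  exact abs_le_abs (by linarith) (by linarith)

noncomputable def partialInf {E F : Type*} (f : E × F → ℝ) (u : E) : ℝ :=
  sInf {r | ∃ y, r = f (u, y)}

theorem partialInf_eq_of_forall_le {E F : Type*} {f : E × F → ℝ} {u : E} {y : F}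
    (hy : ∀ y', f (u, y) ≤ f (u, y')) : partialInf f u = f (u, y) :=
  le_antisymm (csInf_le ⟨f (u, y), by rintro r ⟨y', rfl⟩; exact hy y'⟩ ⟨y, rfl⟩)
    (le_csInf ⟨_, y, rfl⟩ (by rintro r ⟨y', rfl⟩; exact hy y'))

theorem ConvexOn.hasFDerivAt_partialInf {E F : Type*} [NormedAddCommGroup E] [NormedSpace ℝ E]
    [NormedAddCommGroup F] [NormedSpace ℝ F] {f : E × F → ℝ} (hf : ConvexOn ℝ Set.univ f)
    {D : E × F →L[ℝ] ℝ} {u : E} {y : F} (hD : HasFDerivAt f D (u, y))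
    (hy : ∀ y', f (u, y) ≤ f (u, y')) {g : E →L[ℝ] ℝ}
    (hg : HasFDerivAt (fun u' => f (u', y)) g u) :
    HasFDerivAt (partialInf f) g u := by
  have hDu : D.comp (.inl ℝ E F) = g := (hD.comp u (hasFDerivAt_prodMk_left u y)).unique hg
  have hDy : D.comp (.inr ℝ E F) = 0 :=
    IsLocalMin.hasFDerivAt_eq_zero (Filter.Eventually.of_forall hy)
      (hD.comp y (hasFDerivAt_prodMk_right u y))
  have hminorant : ∀ u' y', f (u, y) + g (u' - u) ≤ f (u', y') := by
    intro u' y'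
    have hsupp := hf.affine_le_of_hasFDerivAt trivial trivial hD (z := (u', y'))
    rw [← D.comp_inl_add_comp_inr, hDu, hDy] at hsupp
    simpa using hsupp
  have hval := partialInf_eq_of_forall_le hy
  refine hg.of_le_of_affine_le hval (fun u' => ?_) (fun u' => ?_)
  · exact csInf_le ⟨_, by rintro r ⟨y', rfl⟩; exact hminorant u' y'⟩ ⟨y, rfl⟩
  · rw [hval]
    exact le_csInf ⟨_, y, rfl⟩ (by rintro r ⟨y', rfl⟩; exact hminorant u' y')

theorem stmt_9_general {p q : ℕ}
    (Ψ : WithLp 2 (EuclideanSpace ℝ (Fin p) × EuclideanSpace ℝ (Fin q)) → ℝ)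
    (Ψ' : WithLp 2 (EuclideanSpace ℝ (Fin p) × EuclideanSpace ℝ (Fin q)) →
      WithLp 2 (EuclideanSpace ℝ (Fin p) × EuclideanSpace ℝ (Fin q)))
    (hconv : ConvexOn ℝ Set.univ Ψ)
    (hΨ : ∀ z, HasGradientAt Ψ (Ψ' z) z)
    (Ψb : EuclideanSpace ℝ (Fin p) → ℝ)
    (hΨb : ∀ u, Ψb u = sInf {r | ∃ y : EuclideanSpace ℝ (Fin q),
      r = Ψ (WithLp.toLp 2 ((u, y) : EuclideanSpace ℝ (Fin p) × EuclideanSpace ℝ (Fin q)))})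
    (u : EuclideanSpace ℝ (Fin p)) (y : EuclideanSpace ℝ (Fin q))
    (hy : ∀ y', Ψ (WithLp.toLp 2 ((u, y) : EuclideanSpace ℝ (Fin p) × EuclideanSpace ℝ (Fin q))) ≤
      Ψ (WithLp.toLp 2 ((u, y') : EuclideanSpace ℝ (Fin p) × EuclideanSpace ℝ (Fin q))))
    (gu : EuclideanSpace ℝ (Fin p))
    (hgu : HasGradientAt (fun u' =>
      Ψ (WithLp.toLp 2 ((u', y) : EuclideanSpace ℝ (Fin p) × EuclideanSpace ℝ (Fin q)))) gu u) :
    HasGradientAt Ψb gu u := by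
  let e := (WithLp.prodContinuousLinearEquiv 2 ℝ
    (EuclideanSpace ℝ (Fin p)) (EuclideanSpace ℝ (Fin q))).symm
  have hD : HasFDerivAt (fun z => Ψ (e z)) _ (u, y) :=
    (hΨ (e (u, y))).hasFDerivAt.comp (u, y) e.hasFDerivAt
  rw [show Ψb = partialInf (fun z => Ψ (e z)) from funext hΨb, hasGradientAt_iff_hasFDerivAt]
  exact (hconv.comp_linearMap e.toLinearMap).hasFDerivAt_partialInf hD hy hgu.hasFDerivAt

/-- in the partial-minimization lemma, if `y` minimizes
`Ψ(u,·)`, then `∇Ψ̄(u) = ∇ᵤΨ(u,y)` (so the value does not depend on the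
choice of minimizer, by uniqueness of gradients). -/
theorem stmt_9 {p q : ℕ}
    (N : WithLp 2 (EuclideanSpace ℝ (Fin p) × EuclideanSpace ℝ (Fin q)) → ℝ)
    (hN : IsNorm N) (L : ℝ) (hL : 0 ≤ L)
    (Ψ : WithLp 2 (EuclideanSpace ℝ (Fin p) × EuclideanSpace ℝ (Fin q)) → ℝ)
    (Ψ' : WithLp 2 (EuclideanSpace ℝ (Fin p) × EuclideanSpace ℝ (Fin q)) →
      WithLp 2 (EuclideanSpace ℝ (Fin p) × EuclideanSpace ℝ (Fin q)))
    (hconv : ConvexOn ℝ Set.univ Ψ)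
    (hΨ : ∀ z, HasGradientAt Ψ (Ψ' z) z) (hΨ'c : Continuous Ψ')
    (hlip : ∀ z z', dualNorm N (Ψ' z - Ψ' z') ≤ L * N (z - z'))
    (hmin : ∀ u : EuclideanSpace ℝ (Fin p), ∃ y, ∀ y',
      Ψ (WithLp.toLp 2 ((u, y) : EuclideanSpace ℝ (Fin p) × EuclideanSpace ℝ (Fin q))) ≤
        Ψ (WithLp.toLp 2 ((u, y') : EuclideanSpace ℝ (Fin p) × EuclideanSpace ℝ (Fin q))))
    (Ψb : EuclideanSpace ℝ (Fin p) → ℝ)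
    (hΨb : ∀ u, Ψb u = sInf {r | ∃ y : EuclideanSpace ℝ (Fin q),
      r = Ψ (WithLp.toLp 2 ((u, y) : EuclideanSpace ℝ (Fin p) × EuclideanSpace ℝ (Fin q)))})
    (u : EuclideanSpace ℝ (Fin p)) (y : EuclideanSpace ℝ (Fin q))
    (hy : ∀ y', Ψ (WithLp.toLp 2 ((u, y) : EuclideanSpace ℝ (Fin p) × EuclideanSpace ℝ (Fin q))) ≤
      Ψ (WithLp.toLp 2 ((u, y') : EuclideanSpace ℝ (Fin p) × EuclideanSpace ℝ (Fin q))))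
    (gu : EuclideanSpace ℝ (Fin p))
    (hgu : HasGradientAt (fun u' =>
      Ψ (WithLp.toLp 2 ((u', y) : EuclideanSpace ℝ (Fin p) × EuclideanSpace ℝ (Fin q)))) gu u) :
    HasGradientAt Ψb gu u :=
  stmt_9_general Ψ Ψ' hconv hΨ Ψb hΨb u y hy gu hgu
end
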